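/- Let f : I × (−δ,δ) → 𝕃³ be a generalized cuspidal edge along a regular curve Γ parametrized so that |⟨Γ'(s),Γ'(s)⟩| ≡ 1, and fix s ∈ I with Γ''(s) ≠ 0. Assume that neither the 𝕃³-cuspidal direction vector D̃^L_f(s) nor the limiting normal ν̂^L(s,0) = Γ'(s) ×_L f_{tt}(s,0) is light-like, so the Lorentzian limiting normal curvature κ_ν^L(s) is defined. Then κ_ν^L(s) = 0 if and only if the Euclidean limiting normal curvature κ_ν^E(s) = 0. -/

import Mathlib

open Set Matrix

noncomputable section

/-- Vectors of `ℝ³` (resp. `𝕃³`). -/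
abbrev V3 : Type := Fin 3 → ℝ

/-- Partial derivative in the first variable. -/
def pd1 {E : Type} [NormedAddCommGroup E] [NormedSpace ℝ E] (f : ℝ × ℝ → E) (p : ℝ × ℝ) : E :=
  deriv (fun s : ℝ => f (s, p.2)) p.1

/-- Partial derivative in the second variable. -/
def pd2 {E : Type} [NormedAddCommGroup E] [NormedSpace ℝ E] (f : ℝ × ℝ → E) (p : ℝ × ℝ) : E :=
  deriv (fun t : ℝ => f (p.1, t)) p.2

/-- Determinant of three column vectors of `ℝ³`. -/
def det3 (a b c : V3) : ℝ := Matrix.det (Matrix.of ![a, b, c])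

/-- The Euclidean inner product of `ℝ³`. -/
def eInner (a b : V3) : ℝ := a 0 * b 0 + a 1 * b 1 + a 2 * b 2

/-- The Lorentzian inner product of `𝕃³` (signature `(++-)`). -/
def lInner (a b : V3) : ℝ := a 0 * b 0 + a 1 * b 1 - a 2 * b 2

def eNorm3 (v : V3) : ℝ := Real.sqrt (eInner v v)

def lNorm3 (v : V3) : ℝ := Real.sqrt |lInner v v|

/-- The Euclidean vector product of `ℝ³`. -/
def cross3 (a b : V3) : V3 :=
  ![a 1 * b 2 - a 2 * b 1, a 2 * b 0 - a 0 * b 2, a 0 * b 1 - a 1 * b 0]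

/-- The Lorentzian vector product `a ×_L b = E₃ (a × b)`. -/
def lCross (a b : V3) : V3 :=
  ![a 1 * b 2 - a 2 * b 1, a 2 * b 0 - a 0 * b 2, -(a 0 * b 1 - a 1 * b 0)]

def SpaceLike (v : V3) : Prop := 0 < lInner v v
def TimeLike (v : V3) : Prop := lInner v v < 0
def LightLike (v : V3) : Prop := lInner v v = 0 ∧ v ≠ 0

/-- `φ` is a diffeomorphism from the open set `U` onto the open set `W`. -/
def IsLocalDiffeo {E F : Type} [NormedAddCommGroup E] [NormedSpace ℝ E]
    [NormedAddCommGroup F] [NormedSpace ℝ F] (φ : E → F) (U : Set E) (W : Set F) : Prop :=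
  IsOpen U ∧ IsOpen W ∧ Set.MapsTo φ U W ∧ ContDiffOn ℝ (⊤ : ℕ∞) φ U ∧
    ∃ ψ : F → E, Set.MapsTo ψ W U ∧ ContDiffOn ℝ (⊤ : ℕ∞) ψ W ∧
      (∀ x ∈ U, ψ (φ x) = x) ∧ (∀ y ∈ W, φ (ψ y) = y)

/-- `p` is a cuspidal edge singular point of `f` : locally diffeomorphically
equivalent to `(s,t) ↦ (s, t², t³)`. -/
def IsCuspidalEdgePt (f : ℝ × ℝ → V3) (p : ℝ × ℝ) : Prop :=
  ∃ (U U' : Set (ℝ × ℝ)) (φ : ℝ × ℝ → ℝ × ℝ) (W W' : Set V3) (Ψ : V3 → V3),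
    IsLocalDiffeo φ U U' ∧ IsLocalDiffeo Ψ W W' ∧
    p ∈ U ∧ φ p = (0, 0) ∧ f p ∈ W ∧ Ψ (f p) = 0 ∧
    ∀ q ∈ U, f q ∈ W ∧ Ψ (f q) = ![(φ q).1, (φ q).2 ^ 2, (φ q).2 ^ 3]

/-- `p` is a cuspidal cross cap singular point of `f` : locally diffeomorphically
equivalent to `(s,t) ↦ (s, t², s t³)`. -/
def IsCuspidalCrossCapPt (f : ℝ × ℝ → V3) (p : ℝ × ℝ) : Prop :=
  ∃ (U U' : Set (ℝ × ℝ)) (φ : ℝ × ℝ → ℝ × ℝ) (W W' : Set V3) (Ψ : V3 → V3),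
    IsLocalDiffeo φ U U' ∧ IsLocalDiffeo Ψ W W' ∧
    p ∈ U ∧ φ p = (0, 0) ∧ f p ∈ W ∧ Ψ (f p) = 0 ∧
    ∀ q ∈ U, f q ∈ W ∧ Ψ (f q) = ![(φ q).1, (φ q).2 ^ 2, (φ q).1 * (φ q).2 ^ 3]

/-- Coefficients of the Lorentzian first fundamental form, and the identifier of causality. -/
def ELf (f : ℝ × ℝ → V3) (p : ℝ × ℝ) : ℝ := lInner (pd1 f p) (pd1 f p)
def FLf (f : ℝ × ℝ → V3) (p : ℝ × ℝ) : ℝ := lInner (pd1 f p) (pd2 f p)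
def GLf (f : ℝ × ℝ → V3) (p : ℝ × ℝ) : ℝ := lInner (pd2 f p) (pd2 f p)
def ΔL (f : ℝ × ℝ → V3) (p : ℝ × ℝ) : ℝ := ELf f p * GLf f p - FLf f p ^ 2

def Ltil (f : ℝ × ℝ → V3) (p : ℝ × ℝ) : ℝ := det3 (pd1 f p) (pd2 f p) (pd1 (pd1 f) p)
def Mtil (f : ℝ × ℝ → V3) (p : ℝ × ℝ) : ℝ := det3 (pd1 f p) (pd2 f p) (pd2 (pd1 f) p)
def Ntil (f : ℝ × ℝ → V3) (p : ℝ × ℝ) : ℝ := det3 (pd1 f p) (pd2 f p) (pd2 (pd2 f) p)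

/-- The Gaussian curvature in `𝕃³`. -/
def KL (f : ℝ × ℝ → V3) (p : ℝ × ℝ) : ℝ :=
  -(Ltil f p * Ntil f p - Mtil f p ^ 2) / (ΔL f p) ^ 2

/-- The mean curvature in `𝕃³`. -/
def HL (f : ℝ × ℝ → V3) (p : ℝ × ℝ) : ℝ :=
  (ELf f p * Ntil f p - 2 * FLf f p * Mtil f p + GLf f p * Ltil f p) /
    (2 * ΔL f p * Real.sqrt |ΔL f p|)

/-- The Weingarten (shape operator) matrix in `𝕃³`. -/
def WL (f : ℝ × ℝ → V3) (p : ℝ × ℝ) : Matrix (Fin 2) (Fin 2) ℝ :=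
  (ΔL f p * Real.sqrt |ΔL f p|)⁻¹ •
    (!![GLf f p, -FLf f p; -FLf f p, ELf f p] * !![Ltil f p, Mtil f p; Mtil f p, Ntil f p])

/-- The discriminant of the characteristic polynomial of `WL`; the two principal
curvatures coincide iff it vanishes, and they are real iff it is nonnegative. -/
def DiscWL (f : ℝ × ℝ → V3) (p : ℝ × ℝ) : ℝ :=
  (Matrix.trace (WL f p)) ^ 2 - 4 * Matrix.det (WL f p)

/-- `lam` is a (possibly complex) principal curvature of `f` at `p`, i.e. an
eigenvalue of the Weingarten matrix `WL`. -/
def IsPrincipalCurvature (f : ℝ × ℝ → V3) (p : ℝ × ℝ) (lam : ℂ) : Prop :=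
  lam ^ 2 - ((Matrix.trace (WL f p) : ℝ) : ℂ) * lam + ((Matrix.det (WL f p) : ℝ) : ℂ) = 0

/-- An umbilical point: a space-like or time-like regular point where the two
principal curvatures coincide and `WL` is diagonal. -/
def IsUmbilicPt (f : ℝ × ℝ → V3) (p : ℝ × ℝ) : Prop :=
  ΔL f p ≠ 0 ∧ DiscWL f p = 0 ∧ WL f p 0 1 = 0 ∧ WL f p 1 0 = 0

/-- A quasi-umbilical point: a space-like or time-like regular point where the two
principal curvatures coincide and `WL` is not diagonal. -/
def IsQuasiUmbilicPt (f : ℝ × ℝ → V3) (p : ℝ × ℝ) : Prop :=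
  ΔL f p ≠ 0 ∧ DiscWL f p = 0 ∧ ¬(WL f p 0 1 = 0 ∧ WL f p 1 0 = 0)

/-- `f : I × (−δ,δ) → ℝ³` is a generalized cuspidal edge along `Γ(s) := f(s,0)`. -/
def IsGenCuspidalEdge (f : ℝ × ℝ → V3) (I : Set ℝ) (δ : ℝ) : Prop :=
  0 < δ ∧ ContDiffOn ℝ (⊤ : ℕ∞) f (I ×ˢ Set.Ioo (-δ) δ) ∧
    ∀ s ∈ I, pd2 f (s, 0) = 0 ∧
      LinearIndependent ℝ ![pd1 f (s, 0), pd2 (pd2 f) (s, 0)]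

/-- `d^C(s) = det(Γ'(s), f_tt(s,0), Γ''(s))`; `σ^C(p)` is its sign. -/
def dC (f : ℝ × ℝ → V3) (Γ : ℝ → V3) (s : ℝ) : ℝ :=
  det3 (deriv Γ s) (pd2 (pd2 f) (s, 0)) (deriv (deriv Γ) s)

/-- The order `i_p = k` at the singular point `p = (s,0)`: `k` is the smallest
integer such that `(∂^k Δ_L/∂t^k)(s,0) ≠ 0`. -/
def tOrder (f : ℝ × ℝ → V3) (s : ℝ) (k : ℕ) : Prop :=
  iteratedDeriv k (fun t => ΔL f (s, t)) 0 ≠ 0 ∧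
    ∀ j < k, iteratedDeriv j (fun t => ΔL f (s, t)) 0 = 0

/-- The `𝕃³`-cuspidal direction vector `D̃^L_f(s)`. -/
def DLtil (f : ℝ × ℝ → V3) (Γ : ℝ → V3) (s : ℝ) : V3 :=
  pd2 (pd2 f) (s, 0) -
    (lInner (pd2 (pd2 f) (s, 0)) (deriv Γ s) / lInner (deriv Γ s) (deriv Γ s)) • deriv Γ s

/-- The `𝔼³`-cuspidal direction vector `D̃^E_f(s)`. -/
def DEtil (f : ℝ × ℝ → V3) (Γ : ℝ → V3) (s : ℝ) : V3 :=
  pd2 (pd2 f) (s, 0) -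
    (eInner (pd2 (pd2 f) (s, 0)) (deriv Γ s) / eInner (deriv Γ s) (deriv Γ s)) • deriv Γ s

/-- The limiting normal `ν̂^L(s,0) = Γ'(s) ×_L f_tt(s,0)`. -/
def nuLhat (f : ℝ × ℝ → V3) (Γ : ℝ → V3) (s : ℝ) : V3 :=
  lCross (deriv Γ s) (pd2 (pd2 f) (s, 0))

/-- The Euclidean unit limiting normal `ν^E(s,0)`. -/
def nuEunit (f : ℝ × ℝ → V3) (Γ : ℝ → V3) (s : ℝ) : V3 :=
  (eNorm3 (cross3 (deriv Γ s) (pd2 (pd2 f) (s, 0))))⁻¹ •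
    cross3 (deriv Γ s) (pd2 (pd2 f) (s, 0))

/-- The Euclidean limiting normal curvature `κ_ν^E(s)`. -/
def kappaNuE (f : ℝ × ℝ → V3) (Γ : ℝ → V3) (s : ℝ) : ℝ :=
  eInner (deriv (deriv Γ) s) (nuEunit f Γ s) / eInner (deriv Γ s) (deriv Γ s)

/-- A regular curve of type `S` : the velocity vector is everywhere space-like. -/
def TypeS (Γ : ℝ → V3) (I : Set ℝ) : Prop := ∀ s ∈ I, SpaceLike (deriv Γ s)

/-- A regular curve of type `T` : the velocity vector is everywhere time-like. -/
def TypeT (Γ : ℝ → V3) (I : Set ℝ) : Prop := ∀ s ∈ I, TimeLike (deriv Γ s)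

/-- A regular curve of type `L` : the velocity vector is everywhere light-like. -/
def TypeL (Γ : ℝ → V3) (I : Set ℝ) : Prop :=
  ∀ s ∈ I, lInner (deriv Γ s) (deriv Γ s) = 0 ∧ deriv Γ s ≠ 0



/- ### Auxiliary lemmas for stmt_4 -/

lemma lInner_comm' (a b : V3) : lInner a b = lInner b a := by
  simp only [lInner]; ring

lemma eInner_comm' (a b : V3) : eInner a b = eInner b a := by
  simp only [eInner]; ring

lemma lInner_sub_left' (a b c : V3) : lInner (a - b) c = lInner a c - lInner b c := by
  simp only [lInner, Pi.sub_apply]; ring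

lemma lInner_add_left' (a b c : V3) : lInner (a + b) c = lInner a c + lInner b c := by
  simp only [lInner, Pi.add_apply]; ring

lemma lInner_smul_left' (r : ℝ) (a b : V3) : lInner (r • a) b = r * lInner a b := by
  simp only [lInner, Pi.smul_apply, smul_eq_mul]; ring

lemma lInner_add_right' (a b c : V3) : lInner a (b + c) = lInner a b + lInner a c := by
  simp only [lInner, Pi.add_apply]; ring

lemma lInner_smul_right' (r : ℝ) (a b : V3) : lInner a (r • b) = r * lInner a b := by
  simp only [lInner, Pi.smul_apply, smul_eq_mul]; ring

lemma eInner_sub_right' (a b c : V3) : eInner a (b - c) = eInner a b - eInner a c := by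
  simp only [eInner, Pi.sub_apply]; ring

lemma eInner_add_right' (a b c : V3) : eInner a (b + c) = eInner a b + eInner a c := by
  simp only [eInner, Pi.add_apply]; ring

lemma eInner_smul_right' (r : ℝ) (a b : V3) : eInner a (r • b) = r * eInner a b := by
  simp only [eInner, Pi.smul_apply, smul_eq_mul]; ring

lemma lInner_lCross_left' (a b : V3) : lInner (lCross a b) a = 0 := by
  simp [lInner, lCross]; ring

lemma lInner_lCross_right' (a b : V3) : lInner (lCross a b) b = 0 := by
  simp [lInner, lCross]; ring

lemma eInner_cross_left' (a b : V3) : eInner (cross3 a b) a = 0 := by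
  simp [eInner, cross3]; ring

lemma eInner_cross_right' (a b : V3) : eInner (cross3 a b) b = 0 := by
  simp [eInner, cross3]; ring

lemma eInner_cross_lCross' (a b : V3) :
    eInner (cross3 a b) (lCross a b) = lInner (lCross a b) (lCross a b) := by
  simp [lInner, eInner, lCross, cross3]; ring

lemma eInner_lCross_self' (a b : V3) :
    eInner (lCross a b) (lCross a b) = eInner (cross3 a b) (cross3 a b) := by
  simp [eInner, lCross, cross3]; ring

lemma abs_lInner_le' (v : V3) : |lInner v v| ≤ eInner v v := by
  rw [abs_le]
  constructor <;> simp only [lInner, eInner] <;>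
    nlinarith [sq_nonneg (v 0), sq_nonneg (v 1), sq_nonneg (v 2)]

lemma lInner_as_eInner' (r v : V3) : eInner ![r 0, r 1, -(r 2)] v = lInner r v := by
  simp [eInner, lInner]; ring

lemma solve3' (T A n x : V3) (hd : eInner (cross3 T A) n ≠ 0)
    (h1 : eInner x T = 0) (h2 : eInner x A = 0) (h3 : eInner x n = 0) : x = 0 := by
  simp only [eInner, cross3, Matrix.cons_val_zero, Matrix.cons_val_one, Matrix.head_cons,
    Matrix.cons_val_two, Matrix.tail_cons] at hd h1 h2 h3
  funext i
  fin_cases i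
  · have : (T 0 * (A 1 * n 2 - A 2 * n 1) - A 0 * (T 1 * n 2 - T 2 * n 1)
        + n 0 * (T 1 * A 2 - T 2 * A 1)) * x 0 = 0 := by
      linear_combination (A 1 * n 2 - A 2 * n 1) * h1 + (T 2 * n 1 - T 1 * n 2) * h2
        + (T 1 * A 2 - T 2 * A 1) * h3
    have hd' : T 0 * (A 1 * n 2 - A 2 * n 1) - A 0 * (T 1 * n 2 - T 2 * n 1)
        + n 0 * (T 1 * A 2 - T 2 * A 1) ≠ 0 := by intro h; apply hd; linear_combination h
    simpa using mul_eq_zero.mp this |>.resolve_left hd'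
  · have : (T 0 * (A 1 * n 2 - A 2 * n 1) - A 0 * (T 1 * n 2 - T 2 * n 1)
        + n 0 * (T 1 * A 2 - T 2 * A 1)) * x 1 = 0 := by
      linear_combination (A 2 * n 0 - A 0 * n 2) * h1 + (T 0 * n 2 - T 2 * n 0) * h2
        + (T 2 * A 0 - T 0 * A 2) * h3
    have hd' : T 0 * (A 1 * n 2 - A 2 * n 1) - A 0 * (T 1 * n 2 - T 2 * n 1)
        + n 0 * (T 1 * A 2 - T 2 * A 1) ≠ 0 := by intro h; apply hd; linear_combination h
    simpa using mul_eq_zero.mp this |>.resolve_left hd'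
  · have : (T 0 * (A 1 * n 2 - A 2 * n 1) - A 0 * (T 1 * n 2 - T 2 * n 1)
        + n 0 * (T 1 * A 2 - T 2 * A 1)) * x 2 = 0 := by
      linear_combination (A 0 * n 1 - A 1 * n 0) * h1 + (T 1 * n 0 - T 0 * n 1) * h2
        + (T 0 * A 1 - T 1 * A 0) * h3
    have hd' : T 0 * (A 1 * n 2 - A 2 * n 1) - A 0 * (T 1 * n 2 - T 2 * n 1)
        + n 0 * (T 1 * A 2 - T 2 * A 1) ≠ 0 := by intro h; apply hd; linear_combination h
    simpa using mul_eq_zero.mp this |>.resolve_left hd'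

lemma deriv_lInner_self_eq_zero' {Γ : ℝ → V3} {a b s : ℝ} (hs : s ∈ Set.Ioo a b)
    (hΓ : ContDiffOn ℝ (⊤ : ℕ∞) Γ (Set.Ioo a b))
    (harc : ∀ u ∈ Set.Ioo a b, |lInner (deriv Γ u) (deriv Γ u)| = 1) :
    lInner (deriv (deriv Γ) s) (deriv Γ s) = 0 := by
  have hopen : IsOpen (Set.Ioo a b) := isOpen_Ioo
  have hd1 : ContDiffOn ℝ (⊤ : ℕ∞) (deriv Γ) (Set.Ioo a b) := hΓ.deriv_of_isOpen hopen (by simp)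
  have hnhds : Set.Ioo a b ∈ nhds s := hopen.mem_nhds hs
  have hdiff : DifferentiableAt ℝ (deriv Γ) s :=
    ((hd1.differentiableOn (by simp)).differentiableAt hnhds)
  have hG : HasDerivAt (deriv Γ) (deriv (deriv Γ) s) s := hdiff.hasDerivAt
  have Hi : ∀ i, HasDerivAt (fun u => deriv Γ u i) (deriv (deriv Γ) s i) s :=
    hasDerivAt_pi.mp hG
  set g : ℝ → ℝ := fun u => lInner (deriv Γ u) (deriv Γ u) with hg
  have hgd : HasDerivAt g (2 * lInner (deriv (deriv Γ) s) (deriv Γ s)) s := by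
    have := (((Hi 0).mul (Hi 0)).add ((Hi 1).mul (Hi 1))).sub ((Hi 2).mul (Hi 2))
    simp only [hg, lInner]
    exact this.congr_deriv (by ring)
  have hcont : ContinuousAt g s := hgd.continuousAt
  have hball : ∀ᶠ u in nhds s, |g u - g s| < 2 := by
    have : Metric.ball (g s) 2 ∈ nhds (g s) := Metric.ball_mem_nhds _ (by norm_num)
    filter_upwards [hcont.preimage_mem_nhds this] with u hu
    simpa [Real.dist_eq] using hu
  have hev : g =ᶠ[nhds s] fun _ => g s := by
    filter_upwards [hball, hnhds] with u hu hu2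
    have h1 : g u = 1 ∨ g u = -1 := abs_eq (by norm_num) |>.mp (harc u hu2)
    have h2 : g s = 1 ∨ g s = -1 := abs_eq (by norm_num) |>.mp (harc s hs)
    rcases h1 with h1 | h1 <;> rcases h2 with h2 | h2 <;>
      simp [h1, h2] at hu ⊢ <;> norm_num at hu
  have hz : deriv g s = 0 := by rw [hev.deriv_eq]; exact deriv_const _ _
  rw [hgd.deriv] at hz
  linarith

/-- if neither the cuspidal direction nor the limiting normal is
light-like, then `κ_ν^L` is defined and it vanishes iff `κ_ν^E` vanishes. -/
theorem stmt_4 (aI bI δ : ℝ) (hab : aI < bI) (hδ : 0 < δ)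
    (f : ℝ × ℝ → V3) (Γ : ℝ → V3)
    (hΓsm : ContDiffOn ℝ (⊤ : ℕ∞) Γ (Set.Ioo aI bI))
    (hΓval : ∀ u ∈ Set.Ioo aI bI, f (u, 0) = Γ u)
    (hgce : IsGenCuspidalEdge f (Set.Ioo aI bI) δ)
    (harc : ∀ u ∈ Set.Ioo aI bI, |lInner (deriv Γ u) (deriv Γ u)| = 1)
    (s : ℝ) (hs : s ∈ Set.Ioo aI bI)
    (hΓ'' : deriv (deriv Γ) s ≠ 0)
    (hD : lInner (DLtil f Γ s) (DLtil f Γ s) ≠ 0)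
    (hν : lInner (nuLhat f Γ s) (nuLhat f Γ s) ≠ 0) :
    (∃ ca cb : ℝ, deriv (deriv Γ) s =
        ca • ((lNorm3 (DLtil f Γ s))⁻¹ • DLtil f Γ s) +
          cb • ((lNorm3 (nuLhat f Γ s))⁻¹ • nuLhat f Γ s)) ∧
    (∀ ca cb : ℝ, deriv (deriv Γ) s =
        ca • ((lNorm3 (DLtil f Γ s))⁻¹ • DLtil f Γ s) +
          cb • ((lNorm3 (nuLhat f Γ s))⁻¹ • nuLhat f Γ s) →
      (cb = 0 ↔ kappaNuE f Γ s = 0)) := by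
  set T := deriv Γ s with hTset
  set A := pd2 (pd2 f) (s, 0) with hAset
  set G := deriv (deriv Γ) s with hGset
  set n := nuLhat f Γ s with hnset
  have hnTA : n = lCross T A := rfl
  set lam := lInner A T / lInner T T with hlam
  set D := DLtil f Γ s with hDset
  have hDdef : D = A - lam • T := rfl
  have hT1 : |lInner T T| = 1 := harc s hs
  have hT0 : lInner T T ≠ 0 := by
    intro h; rw [hTset] at h; rw [hTset, h] at hT1; norm_num at hT1
  have hGT : lInner G T = 0 := deriv_lInner_self_eq_zero' hs hΓsm harc
  have hnT : lInner n T = 0 := by rw [hnTA]; exact lInner_lCross_left' T A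
  have hnA : lInner n A = 0 := by rw [hnTA]; exact lInner_lCross_right' T A
  have hDT : lInner D T = 0 := by
    rw [hDdef, lInner_sub_left', lInner_smul_left', hlam]
    field_simp
    ring
  have hnD : lInner n D = 0 := by
    rw [hDdef, lInner_comm', lInner_sub_left', lInner_smul_left',
      lInner_comm' A n, lInner_comm' T n, hnA, hnT]
    ring
  have hd : eInner (cross3 T A) n ≠ 0 := by
    rw [hnTA, eInner_cross_lCross']
    rw [hnTA] at hν; exact hν
  have hDnorm : lNorm3 D ≠ 0 := by
    have : (0:ℝ) < Real.sqrt |lInner D D| := Real.sqrt_pos.mpr (abs_pos.mpr hD)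
    exact this.ne'
  have hnnorm : lNorm3 n ≠ 0 := by
    have : (0:ℝ) < Real.sqrt |lInner n n| := Real.sqrt_pos.mpr (abs_pos.mpr hν)
    exact this.ne'
  constructor
  · -- existence
    set bb := lInner G D / lInner D D with hbb
    set cc := lInner G n / lInner n n with hcc
    set r : V3 := G - (bb • D + cc • n) with hr
    have hrT : lInner r T = 0 := by
      rw [hr, lInner_sub_left', lInner_add_left', lInner_smul_left', lInner_smul_left',
        hGT, hDT, hnT]; ring
    have hrD : lInner r D = 0 := by
      rw [hr, lInner_sub_left', lInner_add_left', lInner_smul_left', lInner_smul_left',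
        hbb, div_mul_cancel₀ _ hD, hnD]; ring
    have hrn : lInner r n = 0 := by
      rw [hr, lInner_sub_left', lInner_add_left', lInner_smul_left', lInner_smul_left',
        hcc, div_mul_cancel₀ _ hν, lInner_comm' D n, hnD]; ring
    have hrA : lInner r A = 0 := by
      have hAD : A = D + lam • T := by rw [hDdef]; abel
      rw [hAD, lInner_add_right', lInner_smul_right', hrD, hrT]; ring
    have hx : (![r 0, r 1, -(r 2)] : V3) = 0 :=
      solve3' T A n _ hd (by rw [lInner_as_eInner']; exact hrT)
        (by rw [lInner_as_eInner']; exact hrA) (by rw [lInner_as_eInner']; exact hrn)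
    have hr0 : r = 0 := by
      funext i
      fin_cases i
      · simpa using congrFun hx 0
      · simpa using congrFun hx 1
      · have := congrFun hx 2
        simp only [Matrix.cons_val_two, Matrix.tail_cons, Matrix.head_cons, Pi.zero_apply,
          neg_eq_zero] at this
        simpa using this
    have key : G = bb • D + cc • n := by
      have := hr0
      rw [hr, sub_eq_zero] at this
      exact this
    refine ⟨bb * lNorm3 D, cc * lNorm3 n, ?_⟩
    rw [smul_smul, smul_smul, mul_assoc, mul_assoc, mul_inv_cancel₀ hDnorm,
      mul_inv_cancel₀ hnnorm, mul_one, mul_one]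
    exact key
  · -- characterization
    intro ca cb hdec
    set w := cross3 T A with hw
    have hwD : eInner w D = 0 := by
      rw [hDdef, eInner_sub_right', eInner_smul_right', eInner_cross_right',
        eInner_cross_left']; ring
    have hwn : eInner w n = lInner n n := by rw [hnTA]; exact eInner_cross_lCross' T A
    have hcomp : eInner w G = cb * ((lNorm3 n)⁻¹ * lInner n n) := by
      rw [hdec, eInner_add_right', eInner_smul_right', eInner_smul_right',
        eInner_smul_right', eInner_smul_right', hwD, hwn]; ring
    have hk : (lNorm3 n)⁻¹ * lInner n n ≠ 0 :=
      mul_ne_zero (inv_ne_zero hnnorm) hν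
    have hwpos : 0 < eInner w w := by
      have h1 : 0 < |lInner n n| := abs_pos.mpr hν
      have h2 : |lInner n n| ≤ eInner n n := abs_lInner_le' n
      have h3 : eInner n n = eInner w w := by rw [hnTA, hw]; exact eInner_lCross_self' T A
      linarith
    have hTTpos : (0:ℝ) < eInner T T := by
      have h2 : |lInner T T| ≤ eInner T T := abs_lInner_le' T
      rw [hT1] at h2; linarith
    have heN : eNorm3 w ≠ 0 := by
      have : (0:ℝ) < Real.sqrt (eInner w w) := Real.sqrt_pos.mpr hwpos
      exact this.ne'
    have hκ : kappaNuE f Γ s = (eNorm3 w)⁻¹ * eInner G w / eInner T T := by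
      have h1 : kappaNuE f Γ s = eInner G (nuEunit f Γ s) / eInner T T := rfl
      have h2 : nuEunit f Γ s = (eNorm3 w)⁻¹ • w := rfl
      rw [h1, h2, eInner_smul_right']
    constructor
    · intro hcb
      rw [hκ, eInner_comm' G w, hcomp, hcb]
      simp
    · intro hkz
      rw [hκ, eInner_comm' G w, hcomp] at hkz
      have h1 : (eNorm3 w)⁻¹ * (cb * ((lNorm3 n)⁻¹ * lInner n n)) = 0 :=
        (div_eq_zero_iff.mp hkz).resolve_right hTTpos.ne'
      have h2 : cb * ((lNorm3 n)⁻¹ * lInner n n) = 0 :=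
        (mul_eq_zero.mp h1).resolve_left (inv_ne_zero heN)
      exact (mul_eq_zero.mp h2).resolve_right hk


end
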